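/- The baxterized R-operators between ℂ² and the Verma module V_α satisfy the unitarity relation: for all u ∈ ℂ, R_{ℂ²,V_α}(u) · R_{V_α,ℂ²}(−u) = sinh(hα/2 + u) sinh(hα/2 − u) · Id as operators on V_α⊗ℂ² (equivalently, as a product of 2×2 matrices with entries in End(V_α)). -/

import Mathlib

noncomputable section

/-- The Verma module `V_α`: finitely supported complex sequences, basis `|n⟩`. -/
abbrev Verma : Type := ℕ →₀ ℂ

/-- The basis vector `|n⟩`. -/
noncomputable def ket (n : ℕ) : Verma := Finsupp.single n 1

/-- The linear operator on `Verma` determined by its values on the basis vectors. -/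
noncomputable def ladderOp (t : ℕ → Verma) : Module.End ℂ Verma :=
  Finsupp.lsum ℂ fun n => LinearMap.toSpanSingleton ℂ Verma (t n)

/-- The q-deformed number `[x]_q` with `q = e^h`. -/
noncomputable def qnum (h x : ℂ) : ℂ :=
  (Complex.exp (h * x) - Complex.exp (-(h * x))) / (Complex.exp h - Complex.exp (-h))

/-- `E |n⟩ = [n]_q [α−n]_q |n−1⟩`, `E |0⟩ = 0`. -/
noncomputable def Eop (h α : ℂ) : Module.End ℂ Verma :=
  ladderOp fun n => if n = 0 then 0 else (qnum h n * qnum h (α - n)) • ket (n - 1)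

/-- `F |n⟩ = |n+1⟩`. -/
noncomputable def Fop : Module.End ℂ Verma := ladderOp fun n => ket (n + 1)

/-- `K |n⟩ = q^{α−1−2n} |n⟩`. -/
noncomputable def Kop (h α : ℂ) : Module.End ℂ Verma :=
  ladderOp fun n => Complex.exp (h * (α - 1 - 2 * n)) • ket n

/-- `K⁻¹ |n⟩ = q^{−(α−1−2n)} |n⟩`. -/
noncomputable def Kinv (h α : ℂ) : Module.End ℂ Verma :=
  ladderOp fun n => Complex.exp (-(h * (α - 1 - 2 * n))) • ket n

/-- Operators on `V_α ⊗ ℂ²` as 2×2 matrices with entries in `End(V_α)`. -/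
abbrev Op2 : Type := Matrix (Fin 2) (Fin 2) (Module.End ℂ Verma)

/-- The diagonal operator `e^{x + cH} : |n⟩ ↦ e^{x + c(α−1−2n)} |n⟩`. -/
noncomputable def expD (α x c : ℂ) : Module.End ℂ Verma :=
  ladderOp fun n => Complex.exp (x + c * (α - 1 - 2 * n)) • ket n

/-- The diagonal operator `sinh(x + cH) : |n⟩ ↦ sinh(x + c(α−1−2n)) |n⟩`. -/
noncomputable def sinhD (α x c : ℂ) : Module.End ℂ Verma :=
  ladderOp fun n => Complex.sinh (x + c * (α - 1 - 2 * n)) • ket n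

/-- The baxterized R-operator `R_{ℂ²,V_α}(u)`, a 2×2 matrix over `End(V_α)` with rows
`(sinh(u+h/2+(h/2)H), sinh(h) e^{u+h/2+(h/2)H} F)` and
`(sinh(h) E e^{−u−h/2−(h/2)H}, sinh(u+h/2−(h/2)H))`. -/
noncomputable def RcV (h α u : ℂ) : Op2 :=
  !![sinhD α (u + h / 2) (h / 2),
      Complex.sinh h • (expD α (u + h / 2) (h / 2) * Fop);
      Complex.sinh h • (Eop h α * expD α (-u - h / 2) (-(h / 2))),
      sinhD α (u + h / 2) (-(h / 2))]

/-- The baxterized R-operator `R_{V_α,ℂ²}(u)`, a 2×2 matrix over `End(V_α)` with rows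
`(sinh(u+h/2+(h/2)H), sinh(h) F e^{−u−h/2+(h/2)H})` and
`(sinh(h) e^{u+h/2−(h/2)H} E, sinh(u+h/2−(h/2)H))`. -/
noncomputable def RVc (h α u : ℂ) : Op2 :=
  !![sinhD α (u + h / 2) (h / 2),
      Complex.sinh h • (Fop * expD α (-u - h / 2) (h / 2));
      Complex.sinh h • (expD α (u + h / 2) (-(h / 2)) * Eop h α),
      sinhD α (u + h / 2) (-(h / 2))]

/-!
Write every diagonal operator as a function `φ(H)` of the weight operator `H`. Then
`φ(H) F = F φ(H - 2)` and `E φ(H) = φ(H - 2) E`, while `F E` and `E F` are functions of `H`.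
In the diagonal entries the exponential factors cancel, because `e^{x + cH} F e^{y - cH} =
e^{x + y - 2c} F`, so those entries are functions of `H`. Using `sinh h · [y]_q = sinh (h y)`,
the required identity at `x = h (1 ± H) / 2`, `X = h α / 2` becomes
`sinh (x + u) sinh (x - u) + sinh (X - x) sinh (X + x) = sinh (X + u) sinh (X - u)`, a consequence
of `sinh (a + b) sinh (a - b) = sinh² a - sinh² b`. The off-diagonal entries cancel because
`sinh` is odd.
-/

open Complex

lemma sinh_add_mul_sinh_sub (x y : ℂ) : sinh (x + y) * sinh (x - y) = sinh x ^ 2 - sinh y ^ 2 := by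
  rw [sinh_add, sinh_sub]
  linear_combination sinh x ^ 2 * cosh_sq_sub_sinh_sq y - sinh y ^ 2 * cosh_sq_sub_sinh_sq x

lemma sinh_mul_sinh_add_sinh_mul_sinh (X x u : ℂ) :
    sinh (x + u) * sinh (x - u) + sinh (X - x) * sinh (X + x) = sinh (X + u) * sinh (X - u) := by
  rw [sinh_add_mul_sinh_sub, sinh_add_mul_sinh_sub, mul_comm, sinh_add_mul_sinh_sub]
  ring

lemma qnum_zero (h : ℂ) : qnum h 0 = 0 := by simp [qnum]

lemma sinh_mul_qnum {h : ℂ} (hq : exp h ^ 2 ≠ 1) (y : ℂ) : sinh h * qnum h y = sinh (h * y) := by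
  have hd : exp h - exp (-h) ≠ 0 := by
    rw [exp_neg, sub_ne_zero]
    intro he
    apply hq
    rw [sq]
    nth_rw 2 [he]
    exact mul_inv_cancel₀ (exp_ne_zero h)
  rw [qnum, sinh, sinh]
  field_simp

lemma sinh_mul_sinh_mul_qnum_mul_qnum {h : ℂ} (hq : exp h ^ 2 ≠ 1) (x y : ℂ) :
    sinh h * (sinh h * (qnum h x * qnum h y)) = sinh (h * x) * sinh (h * y) := by
  rw [← sinh_mul_qnum hq, ← sinh_mul_qnum hq]
  ring

lemma ladderOp_ket (t : ℕ → Verma) (n : ℕ) : ladderOp t (ket n) = t n := by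
  simp [ladderOp, ket]

lemma Verma.end_ext {f g : Module.End ℂ Verma} (H : ∀ n, f (ket n) = g (ket n)) : f = g :=
  Finsupp.lhom_ext' fun n => LinearMap.ext_ring (by simpa [ket] using H n)

lemma Fop_ket (n : ℕ) : Fop (ket n) = ket (n + 1) := ladderOp_ket ..

/-- `diagOp α φ` is `φ(H)` for the weight operator `H |n⟩ = (α - 1 - 2n) |n⟩`. -/
def diagOp (α : ℂ) (φ : ℂ → ℂ) : Module.End ℂ Verma :=
  ladderOp fun n => φ (α - 1 - 2 * n) • ket n

section diagOp

variable (α : ℂ)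

lemma diagOp_ket (φ : ℂ → ℂ) (n : ℕ) : diagOp α φ (ket n) = φ (α - 1 - 2 * n) • ket n :=
  ladderOp_ket ..

lemma sinhD_eq_diagOp (x c : ℂ) : sinhD α x c = diagOp α fun H => sinh (x + c * H) := rfl

lemma expD_eq_diagOp (x c : ℂ) : expD α x c = diagOp α fun H => exp (x + c * H) := rfl

lemma Eop_ket_zero (h : ℂ) : Eop h α (ket 0) = 0 :=
  ladderOp_ket ..

lemma Eop_ket_succ (h : ℂ) (n : ℕ) :
    Eop h α (ket (n + 1)) = (qnum h (n + 1) * qnum h (α - (n + 1))) • ket n := by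
  simp [Eop, ladderOp_ket]

lemma diagOp_mul_diagOp (φ ψ : ℂ → ℂ) : diagOp α φ * diagOp α ψ = diagOp α (φ * ψ) :=
  Verma.end_ext fun n => by simp [diagOp_ket, smul_smul, mul_comm]

lemma diagOp_add (φ ψ : ℂ → ℂ) : diagOp α φ + diagOp α ψ = diagOp α (φ + ψ) :=
  Verma.end_ext fun n => by simp [diagOp_ket, add_smul]

lemma smul_diagOp (s : ℂ) (φ : ℂ → ℂ) : s • diagOp α φ = diagOp α (s • φ) :=
  Verma.end_ext fun n => by simp [diagOp_ket, smul_smul]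

lemma diagOp_eq_smul_one {φ : ℂ → ℂ} {s : ℂ} (hφ : ∀ H, φ H = s) : diagOp α φ = s • 1 :=
  Verma.end_ext fun n => by simp [diagOp_ket, hφ]

lemma diagOp_mul_Fop (φ : ℂ → ℂ) : diagOp α φ * Fop = Fop * diagOp α (fun H => φ (H - 2)) :=
  Verma.end_ext fun n => by
    simp only [Module.End.mul_apply, Fop_ket, diagOp_ket, map_smul]
    congr 2
    push_cast
    ring

lemma Eop_mul_diagOp (h : ℂ) (φ : ℂ → ℂ) :
    Eop h α * diagOp α φ = diagOp α (fun H => φ (H - 2)) * Eop h α :=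
  Verma.end_ext fun n => by
    rcases n with _ | n
    · simp [diagOp_ket, Eop_ket_zero]
    · simp only [Module.End.mul_apply, diagOp_ket, map_smul, Eop_ket_succ, smul_smul, mul_comm]
      congr 3
      push_cast
      ring

lemma Fop_mul_Eop (h : ℂ) :
    Fop * Eop h α = diagOp α fun H => qnum h ((α - 1 - H) / 2) * qnum h ((α + 1 + H) / 2) :=
  Verma.end_ext fun n => by
    rcases n with _ | n
    · simp [diagOp_ket, Eop_ket_zero, qnum_zero]
    · simp only [Module.End.mul_apply, Eop_ket_succ, map_smul, Fop_ket, diagOp_ket]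
      congr 3 <;> push_cast <;> ring

lemma Eop_mul_Fop (h : ℂ) :
    Eop h α * Fop = diagOp α fun H => qnum h ((α + 1 - H) / 2) * qnum h ((α - 1 + H) / 2) :=
  Verma.end_ext fun n => by
    simp only [Module.End.mul_apply, Fop_ket, Eop_ket_succ, diagOp_ket]
    congr 3 <;> ring

lemma expD_mul_Fop_mul_expD_neg (x y c : ℂ) :
    expD α x c * Fop * expD α y (-c) = exp (x + y - 2 * c) • Fop := by
  rw [expD_eq_diagOp, expD_eq_diagOp, diagOp_mul_Fop, mul_assoc, diagOp_mul_diagOp,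
    diagOp_eq_smul_one α fun H => ?_, mul_smul_comm, mul_one]
  simp only [Pi.mul_apply, ← exp_add]
  congr 1
  ring

end diagOp

section entries

variable (h α u : ℂ)

variable {h} in
lemma RcV_mul_RVc_neg_zero_zero (hq : exp h ^ 2 ≠ 1) :
    (RcV h α u * RVc h α (-u)) 0 0 = (sinh (h * α / 2 + u) * sinh (h * α / 2 - u)) • 1 := by
  simp only [RcV, RVc, neg_neg, Matrix.mul_apply, Matrix.of_apply, Matrix.cons_val',
    Matrix.cons_val_fin_one, Matrix.cons_val_zero, Matrix.cons_val_one, Fin.sum_univ_two,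
    Algebra.mul_smul_comm, Algebra.smul_mul_assoc]
  rw [← mul_assoc (expD _ _ _ * Fop), expD_mul_Fop_mul_expD_neg,
    show u + h / 2 + (-u + h / 2) - 2 * (h / 2) = 0 by ring, exp_zero, one_smul, Fop_mul_Eop,
    sinhD_eq_diagOp, sinhD_eq_diagOp, diagOp_mul_diagOp, smul_diagOp, smul_diagOp, diagOp_add,
    diagOp_eq_smul_one α fun H => ?_]
  simp only [Pi.add_apply, Pi.mul_apply, Pi.smul_apply, smul_eq_mul,
    sinh_mul_sinh_mul_qnum_mul_qnum hq]
  convert sinh_mul_sinh_add_sinh_mul_sinh (h * α / 2) (h / 2 + h / 2 * H) u using 4 <;> ring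

lemma RcV_mul_RVc_neg_zero_one : (RcV h α u * RVc h α (-u)) 0 1 = 0 := by
  simp only [RcV, RVc, neg_neg, Matrix.mul_apply, Matrix.of_apply, Matrix.cons_val',
    Matrix.cons_val_fin_one, Matrix.cons_val_zero, Matrix.cons_val_one, Fin.sum_univ_two,
    Algebra.mul_smul_comm, Algebra.smul_mul_assoc]
  rw [← smul_add, ← mul_assoc, sinhD_eq_diagOp, expD_eq_diagOp, expD_eq_diagOp, sinhD_eq_diagOp,
    diagOp_mul_Fop, diagOp_mul_Fop, mul_assoc, mul_assoc, diagOp_mul_diagOp, diagOp_mul_diagOp,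
    ← mul_add, diagOp_add, diagOp_eq_smul_one α (s := 0) fun H => ?_, zero_smul, mul_zero,
    smul_zero]
  simp only [Pi.add_apply, Pi.mul_apply]
  rw [show -u + h / 2 + -(h / 2) * H = -(u + h / 2 + h / 2 * (H - 2)) by ring, sinh_neg]
  ring_nf

lemma RcV_mul_RVc_neg_one_zero : (RcV h α u * RVc h α (-u)) 1 0 = 0 := by
  simp only [RcV, RVc, neg_neg, Matrix.mul_apply, Matrix.of_apply, Matrix.cons_val',
    Matrix.cons_val_fin_one, Matrix.cons_val_zero, Matrix.cons_val_one, Fin.sum_univ_two,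
    Algebra.mul_smul_comm, Algebra.smul_mul_assoc]
  rw [← smul_add, mul_assoc, sinhD_eq_diagOp, expD_eq_diagOp, expD_eq_diagOp, sinhD_eq_diagOp,
    diagOp_mul_diagOp, Eop_mul_diagOp, ← mul_assoc, diagOp_mul_diagOp, ← add_mul, diagOp_add,
    diagOp_eq_smul_one α (s := 0) fun H => ?_, zero_smul, zero_mul, smul_zero]
  simp only [Pi.add_apply, Pi.mul_apply]
  rw [show -u + h / 2 + h / 2 * (H - 2) = -(u + h / 2 + -(h / 2) * H) by ring, sinh_neg]
  ring_nf

variable {h} in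
lemma RcV_mul_RVc_neg_one_one (hq : exp h ^ 2 ≠ 1) :
    (RcV h α u * RVc h α (-u)) 1 1 = (sinh (h * α / 2 + u) * sinh (h * α / 2 - u)) • 1 := by
  simp only [RcV, RVc, neg_neg, Matrix.mul_apply, Matrix.of_apply, Matrix.cons_val',
    Matrix.cons_val_fin_one, Matrix.cons_val_zero, Matrix.cons_val_one, Fin.sum_univ_two,
    Algebra.mul_smul_comm, Algebra.smul_mul_assoc]
  have gauge := expD_mul_Fop_mul_expD_neg α (-u - h / 2) (u - h / 2) (-(h / 2))
  rw [neg_neg, show -u - h / 2 + (u - h / 2) - 2 * -(h / 2) = 0 by ring, exp_zero,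
    one_smul] at gauge
  rw [mul_assoc (Eop h α), ← mul_assoc (expD _ _ _), gauge, Eop_mul_Fop,
    sinhD_eq_diagOp, sinhD_eq_diagOp, diagOp_mul_diagOp, smul_diagOp, smul_diagOp, diagOp_add,
    diagOp_eq_smul_one α fun H => ?_]
  simp only [Pi.add_apply, Pi.mul_apply, Pi.smul_apply, smul_eq_mul,
    sinh_mul_sinh_mul_qnum_mul_qnum hq]
  rw [add_comm, mul_comm (sinh (h * ((α + 1 - H) / 2)))]
  convert sinh_mul_sinh_add_sinh_mul_sinh (h * α / 2) (h / 2 - h / 2 * H) u using 4 <;> ring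

end entries

/-- Unitarity of the baxterized R-operators between `ℂ²` and `V_α`:
`R_{ℂ²,V_α}(u) R_{V_α,ℂ²}(−u) = sinh(hα/2 + u) sinh(hα/2 − u) · Id`. -/
theorem R_unitarity (h α : ℂ) (hq : Complex.exp h ^ 2 ≠ 1) :
    ∀ u : ℂ,
      RcV h α u * RVc h α (-u)
        = (Complex.sinh (h * α / 2 + u) * Complex.sinh (h * α / 2 - u)) • (1 : Op2) := by
  intro u
  ext1 i j
  fin_cases i <;> fin_cases j
  · simpa using RcV_mul_RVc_neg_zero_zero α u hq
  · simpa using RcV_mul_RVc_neg_zero_one h α u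
  · simpa using RcV_mul_RVc_neg_one_zero h α u
  · simpa using RcV_mul_RVc_neg_one_one α u hq
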